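/- Let ψ : A → B be an equivalence of graded algebras between group gradings Γ on A and Γ' on B, with supports S and T respectively. Then the bijection γ : S → T defined by ψ(A_s) = B_{γ(s)} extends uniquely to a group isomorphism U(Γ) → U(Γ') of the universal groups. -/

import Mathlib

/-- The defining relators of the universal group of a grading. -/
def univRels {F A : Type} [Field F] [NonUnitalNonAssocRing A] [Module F A]
    [SMulCommClass F A A] [IsScalarTower F A A]
    {S : Type} (𝒜 : S → Submodule F A) : Set (FreeGroup S) :=
  {w | ∃ s t u : S,
    (∃ a ∈ 𝒜 s, ∃ b ∈ 𝒜 t, a * b ≠ 0) ∧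
    (∀ a ∈ 𝒜 s, ∀ b ∈ 𝒜 t, a * b ∈ 𝒜 u) ∧
    w = FreeGroup.of s * FreeGroup.of t * (FreeGroup.of u)⁻¹}

/-- Auxiliary: an equivalence of gradings sends relators into the kernel. -/
theorem univRels_lift_eq_one {F A B : Type} [Field F]
    [NonUnitalNonAssocRing A] [Module F A] [SMulCommClass F A A] [IsScalarTower F A A]
    [NonUnitalNonAssocRing B] [Module F B] [SMulCommClass F B B] [IsScalarTower F B B]
    {S T : Type} (𝒜 : S → Submodule F A) (ℬ : T → Submodule F B)
    (ψ : A ≃ₗ[F] B) (hψmul : ∀ x y : A, ψ (x * y) = ψ x * ψ y)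
    (γ : S → T) (hγ : ∀ s : S, Submodule.map ψ.toLinearMap (𝒜 s) = ℬ (γ s)) :
    ∀ r ∈ univRels 𝒜, FreeGroup.lift
      (fun s => (PresentedGroup.of (γ s) : PresentedGroup (univRels ℬ))) r = 1 := by
  rintro r ⟨s, t, u, ⟨a, ha, b, hb, hab⟩, hmul, rfl⟩
  have hmem : (FreeGroup.of (γ s) * FreeGroup.of (γ t) * (FreeGroup.of (γ u))⁻¹ :
      FreeGroup T) ∈ univRels ℬ := by
    refine ⟨γ s, γ t, γ u, ⟨ψ a, ?_, ψ b, ?_, ?_⟩, ?_, rfl⟩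
    · rw [← hγ]; exact ⟨a, ha, rfl⟩
    · rw [← hγ]; exact ⟨b, hb, rfl⟩
    · rw [← hψmul]
      simpa using hab
    · rintro a' ha' b' hb'
      rw [← hγ] at ha' hb'
      obtain ⟨a, ha, rfl⟩ := ha'
      obtain ⟨b, hb, rfl⟩ := hb'
      rw [← hγ]
      exact ⟨a * b, hmul a ha b hb, hψmul a b⟩
  have : ((QuotientGroup.mk (FreeGroup.of (γ s) * FreeGroup.of (γ t) *
      (FreeGroup.of (γ u))⁻¹) : PresentedGroup (univRels ℬ)) = 1) := by
    rw [QuotientGroup.eq_one_iff]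
    exact Subgroup.subset_normalClosure hmem
  simp only [map_mul, map_inv, FreeGroup.lift_apply_of]
  exact this

/-- Let `ψ : A → B` be an equivalence of graded algebras between group
gradings `Γ` (components `𝒜 s`, `s ∈ S`) and `Γ'` (components `ℬ t`, `t ∈ T`), and
let `γ : S ≃ T` be the induced bijection of supports, `ψ(A_s) = B_{γ s}`. Then `γ`
extends uniquely to a group isomorphism `U(Γ) ≃* U(Γ')` of the universal groups. -/
theorem stmt8 (F : Type) [Field F]
    (A : Type) [NonUnitalNonAssocRing A] [Module F A]
    [SMulCommClass F A A] [IsScalarTower F A A]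
    (B : Type) [NonUnitalNonAssocRing B] [Module F B]
    [SMulCommClass F B B] [IsScalarTower F B B]
    (S T : Type) [DecidableEq S] [DecidableEq T]
    (𝒜 : S → Submodule F A) (ℬ : T → Submodule F B)
    (hneA : ∀ s, 𝒜 s ≠ ⊥) (hneB : ∀ t, ℬ t ≠ ⊥)
    (hintA : DirectSum.IsInternal 𝒜) (hintB : DirectSum.IsInternal ℬ)
    (hιA : Function.Injective
      (PresentedGroup.of (rels := univRels 𝒜) : S → PresentedGroup (univRels 𝒜)))
    (hιB : Function.Injective
      (PresentedGroup.of (rels := univRels ℬ) : T → PresentedGroup (univRels ℬ)))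
    (ψ : A ≃ₗ[F] B) (hψmul : ∀ x y : A, ψ (x * y) = ψ x * ψ y)
    (γ : S ≃ T) (hγ : ∀ s : S, Submodule.map ψ.toLinearMap (𝒜 s) = ℬ (γ s)) :
    ∃! e : PresentedGroup (univRels 𝒜) ≃* PresentedGroup (univRels ℬ),
      ∀ s : S, e (PresentedGroup.of s) = PresentedGroup.of (γ s) := by
  have hψ' : ∀ x y : B, ψ.symm (x * y) = ψ.symm x * ψ.symm y := by
    intro x y
    apply ψ.injective
    simp [hψmul]
  have hγ' : ∀ t : T, Submodule.map ψ.symm.toLinearMap (ℬ t) = 𝒜 (γ.symm t) := by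
    intro t
    have h := hγ (γ.symm t)
    rw [Equiv.apply_symm_apply] at h
    rw [← h]
    ext x
    constructor
    · rintro ⟨y, ⟨z, hz, rfl⟩, rfl⟩
      simpa using hz
    · intro hx
      exact ⟨ψ x, ⟨x, hx, rfl⟩, by simp⟩
  have h1 := univRels_lift_eq_one 𝒜 ℬ ψ hψmul γ hγ
  have h2 := univRels_lift_eq_one ℬ 𝒜 ψ.symm hψ' γ.symm hγ'
  let φ : PresentedGroup (univRels 𝒜) →* PresentedGroup (univRels ℬ) :=
    PresentedGroup.toGroup h1
  let φ' : PresentedGroup (univRels ℬ) →* PresentedGroup (univRels 𝒜) :=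
    PresentedGroup.toGroup h2
  have hφof : ∀ s, φ (PresentedGroup.of s) = PresentedGroup.of (γ s) := fun s =>
    PresentedGroup.toGroup.of h1
  have hφ'of : ∀ t, φ' (PresentedGroup.of t) = PresentedGroup.of (γ.symm t) := fun t =>
    PresentedGroup.toGroup.of h2
  have hl : φ'.comp φ = MonoidHom.id _ := by
    apply PresentedGroup.ext
    intro s
    simp [hφof, hφ'of]
  have hr : φ.comp φ' = MonoidHom.id _ := by
    apply PresentedGroup.ext
    intro t
    simp [hφof, hφ'of]
  refine ⟨MonoidHom.toMulEquiv φ φ' hl hr, hφof, ?_⟩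
  intro e he
  apply MulEquiv.toMonoidHom_injective
  apply PresentedGroup.ext
  intro s
  simp [he s, hφof s]
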